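/- Let h(w,z) = [[π², π·sin²(πw)], [π·sin²(πw), 1 + sin⁴(πw)]] be a 2×2 matrix-valued function on (0,1) × ℝ, and for (w,z) ∈ (0,1) × ℝ define the Christoffel symbols Γ^k_{ij}(w,z) = (1/2) Σ_{l=1}^{2} (h(w,z)^{−1})_{k l} (∂_i h_{j l}(w,z) + ∂_j h_{i l}(w,z) − ∂_l h_{i j}(w,z)), where ∂_1 = ∂/∂w and ∂_2 = ∂/∂z. Then the curve γ(s) = (arccot(s)/π, s), s ∈ ℝ, satisfies the geodesic equations: for k = 1, 2 and all s ∈ ℝ, γ̈^k(s) + Σ_{i,j=1}^{2} Γ^k_{ij}(γ(s)) γ̇^i(s) γ̇^j(s) = 0. -/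

import Mathlib

/-- Inverse cotangent `arccot : ℝ → (0, π)`. -/
noncomputable def arccot (s : ℝ) : ℝ := Real.pi / 2 - Real.arctan s

/-- The metric `h(w,z) = [[π², π sin²(πw)], [π sin²(πw), 1 + sin⁴(πw)]]`,
as a matrix-valued function of the point `p = (w, z)`. -/
noncomputable def hmat (p : Fin 2 → ℝ) : Matrix (Fin 2) (Fin 2) ℝ :=
  !![Real.pi ^ 2, Real.pi * (Real.sin (Real.pi * p 0)) ^ 2;
     Real.pi * (Real.sin (Real.pi * p 0)) ^ 2, 1 + (Real.sin (Real.pi * p 0)) ^ 4]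

/-- The partial derivative `∂_i h_{j l}` at the point `p` (with `∂_1 = ∂/∂w`, `∂_2 = ∂/∂z`). -/
noncomputable def partialh (i j l : Fin 2) (p : Fin 2 → ℝ) : ℝ :=
  fderiv ℝ (fun q => hmat q j l) p (Pi.single i 1)

/-- The Christoffel symbols
`Γ^k_{ij} = (1/2) Σ_l (h⁻¹)_{k l} (∂_i h_{j l} + ∂_j h_{i l} - ∂_l h_{i j})`. -/
noncomputable def Γchristoffel (k i j : Fin 2) (p : Fin 2 → ℝ) : ℝ :=
  (1 / 2) * ∑ l : Fin 2, (hmat p)⁻¹ k l *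
    (partialh i j l p + partialh j i l p - partialh l i j p)

/-- The curve `γ(s) = (arccot(s)/π, s)`, taking values in `(0,1) × ℝ`. -/
noncomputable def γcurve (s : ℝ) : Fin 2 → ℝ := ![arccot s / Real.pi, s]

/- ---------- auxiliary lemmas ---------- -/

lemma fderiv_proj_comp {f : ℝ → ℝ} {f' : ℝ} (p : Fin 2 → ℝ) (hf : HasDerivAt f f' (p 0))
    (i : Fin 2) :
    fderiv ℝ (fun q : Fin 2 → ℝ => f (q 0)) p (Pi.single i 1)
      = f' * (Pi.single i 1 : Fin 2 → ℝ) 0 := by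
  have h0 := hasFDerivAt_apply (𝕜 := ℝ) (F' := fun _ : Fin 2 => ℝ) 0 p
  have h : HasFDerivAt (fun q : Fin 2 → ℝ => f (q 0))
      (f' • ContinuousLinearMap.proj (R := ℝ) (φ := fun _ : Fin 2 => ℝ) 0) p :=
    hf.comp_hasFDerivAt p h0
  rw [h.fderiv]
  simp [smul_eq_mul, mul_comm]

lemma hasDerivAt_sinsq (w : ℝ) : HasDerivAt (fun w => Real.sin (Real.pi * w) ^ 2)
    (2 * Real.pi * Real.sin (Real.pi * w) * Real.cos (Real.pi * w)) w := by
  have h1 : HasDerivAt (fun w : ℝ => Real.pi * w) Real.pi w := by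
    simpa using (hasDerivAt_id w).const_mul Real.pi
  have h3 := ((Real.hasDerivAt_sin (Real.pi * w)).comp w h1).pow 2
  refine h3.congr_deriv ?_
  simp [Function.comp]
  ring

lemma partialh_00 (i : Fin 2) (p : Fin 2 → ℝ) : partialh i 0 0 p = 0 := by
  unfold partialh
  have he : (fun q : Fin 2 → ℝ => hmat q 0 0) = fun _ => Real.pi ^ 2 := by
    funext q; simp [hmat]
  rw [he, fderiv_fun_const]
  simp

lemma partialh_01 (i : Fin 2) (p : Fin 2 → ℝ) :
    partialh i 0 1 p = (Pi.single i 1 : Fin 2 → ℝ) 0 *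
      (2 * Real.pi ^ 2 * Real.sin (Real.pi * p 0) * Real.cos (Real.pi * p 0)) := by
  unfold partialh
  have he : (fun q : Fin 2 → ℝ => hmat q 0 1)
      = fun q => Real.pi * Real.sin (Real.pi * q 0) ^ 2 := by
    funext q; simp [hmat]
  rw [he, fderiv_proj_comp p ((hasDerivAt_sinsq (p 0)).const_mul Real.pi) i]
  ring

lemma partialh_10 (i : Fin 2) (p : Fin 2 → ℝ) :
    partialh i 1 0 p = (Pi.single i 1 : Fin 2 → ℝ) 0 *
      (2 * Real.pi ^ 2 * Real.sin (Real.pi * p 0) * Real.cos (Real.pi * p 0)) := by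
  unfold partialh
  have he : (fun q : Fin 2 → ℝ => hmat q 1 0)
      = fun q => Real.pi * Real.sin (Real.pi * q 0) ^ 2 := by
    funext q; simp [hmat]
  rw [he, fderiv_proj_comp p ((hasDerivAt_sinsq (p 0)).const_mul Real.pi) i]
  ring

lemma partialh_11 (i : Fin 2) (p : Fin 2 → ℝ) :
    partialh i 1 1 p = (Pi.single i 1 : Fin 2 → ℝ) 0 *
      (4 * Real.pi * Real.sin (Real.pi * p 0) ^ 3 * Real.cos (Real.pi * p 0)) := by
  unfold partialh
  have he : (fun q : Fin 2 → ℝ => hmat q 1 1)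
      = fun q => 1 + (Real.sin (Real.pi * q 0) ^ 2) ^ 2 := by
    funext q; simp [hmat]; ring
  have hd : HasDerivAt (fun w : ℝ => 1 + (Real.sin (Real.pi * w) ^ 2) ^ 2)
      (4 * Real.pi * Real.sin (Real.pi * p 0) ^ 3 * Real.cos (Real.pi * p 0)) (p 0) := by
    have h2 := ((hasDerivAt_sinsq (p 0)).pow 2).const_add 1
    refine h2.congr_deriv ?_
    ring
  rw [he, fderiv_proj_comp p hd i]
  ring

lemma hmat_inv (p : Fin 2 → ℝ) :
    (hmat p)⁻¹ =
      !![(1 + Real.sin (Real.pi * p 0) ^ 4) / Real.pi ^ 2,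
         -(Real.sin (Real.pi * p 0) ^ 2 / Real.pi);
         -(Real.sin (Real.pi * p 0) ^ 2 / Real.pi), 1] := by
  have hπ : Real.pi ≠ 0 := Real.pi_ne_zero
  apply Matrix.inv_eq_right_inv
  ext i j
  fin_cases i <;> fin_cases j <;>
    simp [hmat, Matrix.mul_apply, Fin.sum_univ_two, Matrix.one_apply] <;>
    (try field_simp) <;> (try ring)

lemma hasDerivAt_gamma0 (t : ℝ) :
    HasDerivAt (fun t' => γcurve t' 0) (-((Real.pi * (1 + t ^ 2))⁻¹)) t := by
  have h : HasDerivAt (fun t' => (Real.pi / 2 - Real.arctan t') / Real.pi)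
      ((0 - 1 / (1 + t ^ 2)) / Real.pi) t :=
    ((hasDerivAt_const t (Real.pi / 2)).sub (Real.hasDerivAt_arctan t)).div_const Real.pi
  have he : (fun t' => γcurve t' 0) = fun t' => (Real.pi / 2 - Real.arctan t') / Real.pi := by
    funext t'; simp [γcurve, arccot]
  rw [he]
  convert h using 1
  have h1 : (1:ℝ) + t ^ 2 ≠ 0 := by positivity
  field_simp
  ring

lemma deriv_gamma0 (t : ℝ) :
    deriv (fun t' => γcurve t' 0) t = -((Real.pi * (1 + t ^ 2))⁻¹) :=
  (hasDerivAt_gamma0 t).deriv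

lemma deriv2_gamma0 (s : ℝ) :
    deriv (fun t => deriv (fun t' => γcurve t' 0) t) s
      = 2 * s / (Real.pi * (1 + s ^ 2) ^ 2) := by
  have he : (fun t => deriv (fun t' => γcurve t' 0) t)
      = fun t => -((Real.pi * (1 + t ^ 2))⁻¹) := funext fun t => deriv_gamma0 t
  rw [he]
  have hg : HasDerivAt (fun t : ℝ => Real.pi * (1 + t ^ 2)) (Real.pi * (2 * s)) s := by
    have := ((hasDerivAt_pow 2 s).const_add 1).const_mul Real.pi
    refine this.congr_deriv ?_
    simp [mul_comm]
  have hne : Real.pi * (1 + s ^ 2) ≠ 0 := by positivity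
  have h := (hg.inv hne).neg
  rw [show deriv (fun t : ℝ => -((Real.pi * (1 + t ^ 2))⁻¹)) s = _ from h.deriv]
  field_simp

lemma deriv2_gamma0' (s : ℝ) :
    deriv (fun t : ℝ => -((Real.pi * (1 + t ^ 2))⁻¹)) s
      = 2 * s / (Real.pi * (1 + s ^ 2) ^ 2) := by
  have hg : HasDerivAt (fun t : ℝ => Real.pi * (1 + t ^ 2)) (Real.pi * (2 * s)) s := by
    have := ((hasDerivAt_pow 2 s).const_add 1).const_mul Real.pi
    refine this.congr_deriv ?_
    simp [mul_comm]
  have hne : Real.pi * (1 + s ^ 2) ≠ 0 := by positivity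
  have h := (hg.inv hne).neg
  rw [show deriv (fun t : ℝ => -((Real.pi * (1 + t ^ 2))⁻¹)) s = _ from h.deriv]
  field_simp

lemma deriv_gamma1 (t : ℝ) : deriv (fun t' => γcurve t' 1) t = 1 := by
  have he : (fun t' => γcurve t' 1) = fun t' => t' := by
    funext t'; simp [γcurve]
  rw [he, deriv_id'']

lemma deriv2_gamma1 (s : ℝ) :
    deriv (fun t => deriv (fun t' => γcurve t' 1) t) s = 0 := by
  have he : (fun t => deriv (fun t' => γcurve t' 1) t) = fun _ => (1:ℝ) :=
    funext fun t => deriv_gamma1 t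
  rw [he, deriv_const]

/-- The curve `γ(s) = (arccot(s)/π, s)` satisfies the geodesic equations
`γ̈^k + Σ_{i,j} Γ^k_{ij}(γ) γ̇^i γ̇^j = 0` for the metric `h`. -/
theorem stmt_1 (k : Fin 2) (s : ℝ) :
    deriv (fun t => deriv (fun t' => γcurve t' k) t) s +
      ∑ i : Fin 2, ∑ j : Fin 2,
        Γchristoffel k i j (γcurve s) *
          deriv (fun t => γcurve t i) s * deriv (fun t => γcurve t j) s = 0 := by
  have hπ : Real.pi ≠ 0 := Real.pi_ne_zero
  have hQ : (1:ℝ) + s ^ 2 ≠ 0 := by positivity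
  have hp0 : Real.pi * γcurve s 0 = arccot s := by
    simp only [γcurve, Matrix.cons_val_zero]
    field_simp
  have hsin : Real.sin (arccot s) = Real.cos (Real.arctan s) := by
    rw [arccot, Real.sin_pi_div_two_sub]
  have hcos : Real.cos (arccot s) = s * Real.sin (arccot s) := by
    rw [arccot, Real.cos_pi_div_two_sub, Real.sin_pi_div_two_sub, Real.sin_arctan,
      Real.cos_arctan]
    ring
  have hS2 : Real.sin (arccot s) ^ 2 = 1 / (1 + s ^ 2) := by
    rw [hsin]; exact Real.cos_sq_arctan s
  have hS4 : Real.sin (arccot s) ^ 4 = 1 / (1 + s ^ 2) ^ 2 := by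
    rw [show Real.sin (arccot s) ^ 4 = (Real.sin (arccot s) ^ 2) ^ 2 by ring, hS2]
    field_simp
  have hS6 : Real.sin (arccot s) ^ 6 = 1 / (1 + s ^ 2) ^ 3 := by
    rw [show Real.sin (arccot s) ^ 6 = (Real.sin (arccot s) ^ 2) ^ 3 by ring, hS2]
    field_simp
  have hS8 : Real.sin (arccot s) ^ 8 = 1 / (1 + s ^ 2) ^ 4 := by
    rw [show Real.sin (arccot s) ^ 8 = (Real.sin (arccot s) ^ 2) ^ 4 by ring, hS2]
    field_simp
  have hone : (Pi.single (1:Fin 2) 1 : Fin 2 → ℝ) 0 = 0 := by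
    simp [Pi.single_apply]
  have hzero : (Pi.single (0:Fin 2) 1 : Fin 2 → ℝ) 0 = 1 := Pi.single_eq_same 0 1
  fin_cases k <;>
    simp only [Fin.zero_eta, Fin.mk_one, Fin.isValue, Fin.sum_univ_two, Γchristoffel,
      partialh_00, partialh_01, partialh_10, partialh_11, hmat_inv, hp0,
      deriv_gamma0, deriv_gamma1, deriv2_gamma0, deriv2_gamma1, hone, hzero,
      Matrix.cons_val_zero, Matrix.cons_val_one, Matrix.head_cons, Matrix.head_fin_const]
  · simp only [deriv2_gamma0', Matrix.of_apply, Matrix.cons_val', Matrix.cons_val_zero,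
      Matrix.cons_val_one, Matrix.head_cons, Matrix.head_fin_const, Matrix.empty_val',
      Matrix.cons_val_fin_one, deriv_const']
    simp only [hcos]
    ring_nf
    simp only [hS2, hS4, hS6, hS8]
    field_simp
    ring
  · simp only [deriv2_gamma0', Matrix.of_apply, Matrix.cons_val', Matrix.cons_val_zero,
      Matrix.cons_val_one, Matrix.head_cons, Matrix.head_fin_const, Matrix.empty_val',
      Matrix.cons_val_fin_one, deriv_const']
    simp only [hcos]
    ring_nf
    simp only [hS2, hS4, hS6, hS8]
    field_simp
    ring
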